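/- The set BV[0,∞) of functions of bounded variation (on each compact interval) in D_ℝ[0,∞) is a Borel measurable subset of the Skorohod space D_ℝ[0,∞). -/

import Mathlib

/-!
The variation of a right-continuous path is seen by countably many times: rounding times up to
the grid `(k+1)⁻¹ℕ` gives paths `x ∘ roundUp k` converging pointwise to `x`, and since the
variation is lower semicontinuous under pointwise convergence, the variation of `x` on `[0, t]` is
at most its variation on the rationals of `[0, t + 1]`. Over a countable set, the variation is a
countable supremum of finite sums of distances between evaluations, hence measurable.
-/

open Filter Topology Set MeasureTheory
open scoped NNReal

/-- A path `x : [0,∞) → E` is RCLL (càdlàg): right continuous with left limits. -/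
def IsCadlag {E : Type*} [TopologicalSpace E] (x : ℝ≥0 → E) : Prop :=
  (∀ t, ContinuousWithinAt x (Set.Ici t) t) ∧
  ∀ t : ℝ≥0, 0 < t → ∃ l, Tendsto x (𝓝[<] t) (𝓝 l)

/-- The Skorohod space `D_E[0,∞)` of RCLL paths. -/
def Skorohod (E : Type*) [TopologicalSpace E] : Type _ :=
  {x : ℝ≥0 → E // IsCadlag x}

/-- The Borel σ-algebra of the Skorohod topology, which is generated by the
evaluation maps `π_t` (Ethier–Kurtz, Thm 3.5.6, Prop 3.7.1). -/
instance {E : Type*} [TopologicalSpace E] [MeasurableSpace E] : MeasurableSpace (Skorohod E) :=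
  ⨆ t : ℝ≥0, MeasurableSpace.comap (fun x : Skorohod E => x.1 t) inferInstance

lemma IsCadlag.stopped {E : Type*} [TopologicalSpace E] {x : ℝ≥0 → E} (hx : IsCadlag x)
    (t : ℝ≥0) : IsCadlag (fun s => x (s ⊓ t)) := by
  constructor
  · intro s
    rcases le_or_gt s t with hst | hts
    · have h1 : ContinuousWithinAt x (Set.Ici s) s := hx.1 s
      have h2 : ContinuousWithinAt (fun u : ℝ≥0 => u ⊓ t) (Set.Ici s) s :=
        (continuous_id.inf continuous_const).continuousWithinAt
      have hmaps : Set.MapsTo (fun u : ℝ≥0 => u ⊓ t) (Set.Ici s) (Set.Ici s) := by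
        intro u hu
        exact le_inf hu hst
      have hfs : s ⊓ t = s := inf_eq_left.2 hst
      have := ContinuousWithinAt.comp (f := fun u : ℝ≥0 => u ⊓ t) (g := x)
        (by simpa [hfs] using h1) h2 hmaps
      exact this
    · apply ContinuousWithinAt.congr (f := fun _ => x t) continuousWithinAt_const
      · intro u hu
        have : t ≤ u := le_trans hts.le hu
        simp [inf_eq_right.2 this]
      · simp [inf_eq_right.2 hts.le]
  · intro s hs
    rcases le_or_gt s t with hst | hts
    · obtain ⟨l, hl⟩ := hx.2 s hs
      refine ⟨l, Tendsto.congr' ?_ hl⟩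
      filter_upwards [self_mem_nhdsWithin] with u hu
      rw [inf_eq_left.2 (le_trans (le_of_lt hu) hst)]
    · refine ⟨x t, Tendsto.congr' ?_ tendsto_const_nhds⟩
      have hmem : Set.Ioo t s ∈ 𝓝[<] s := Ioo_mem_nhdsLT hts
      filter_upwards [hmem] with u hu
      rw [inf_eq_right.2 hu.1.le]

/-- The stopping map `θ_t : D_E[0,∞) → D_E[0,∞)`, `θ_t(x)(s) = x(s ∧ t)`. -/
def theta {E : Type*} [TopologicalSpace E] (t : ℝ≥0) (x : Skorohod E) : Skorohod E :=
  ⟨fun s => x.1 (s ⊓ t), x.2.stopped t⟩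

/-- The canonical filtration `F_t^{(E)} = σ(π_s : s ≤ t)` on the Skorohod space. -/
def skorohodFiltration (E : Type*) [TopologicalSpace E] [MeasurableSpace E] (t : ℝ≥0) :
    MeasurableSpace (Skorohod E) :=
  ⨆ s : ℝ≥0, ⨆ _ : s ≤ t, MeasurableSpace.comap (fun x : Skorohod E => x.1 s) inferInstance

namespace eVariationOn

variable {α : Type*} [LinearOrder α] {E : Type*} [PseudoEMetricSpace E]

theorem eq_iSup_fin (f : α → E) (s : Set α) :
    eVariationOn f s = ⨆ (m : ℕ) (u : {u : Fin (m + 1) → s // Monotone u}),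
      ∑ i : Fin m, edist (f (u.1 i.succ)) (f (u.1 i.castSucc)) := by
  refine le_antisymm (iSup_le fun ⟨m, u, hu, us⟩ => ?_) (iSup₂_le fun m ⟨u, hu⟩ => ?_)
  · refine le_iSup₂_of_le m ⟨fun i => ⟨u i, us i⟩, fun i j hij => hu hij⟩ (le_of_eq ?_)
    exact (Fin.sum_univ_eq_sum_range (fun i => edist (f (u (i + 1))) (f (u i))) m).symm
  · let v : ℕ → α := fun j => u ⟨min j m, by omega⟩
    have hv : Monotone v := fun i j hij => hu (Fin.mk_le_mk.2 (min_le_min_right m hij))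
    refine le_of_eq_of_le ?_ (sum_le (f := f) (n := m) hv fun j => (u _).2)
    rw [← Fin.sum_univ_eq_sum_range (fun i => edist (f (v (i + 1))) (f (v i)))]
    refine Finset.sum_congr rfl fun i _ => ?_
    simp only [v, min_eq_left i.isLt.le, min_eq_left (Nat.succ_le_of_lt i.isLt)]
    rfl

theorem le_of_tendsto_comp {ι : Type*} {p : Filter ι} [p.NeBot] {φ : ι → α → α} {f : α → E}
    {s t : Set α} (hφ : ∀ i, MonotoneOn (φ i) s) (hst : ∀ i, MapsTo (φ i) s t)
    (hf : ∀ x ∈ s, Tendsto (fun i => f (φ i x)) p (𝓝 (f x))) :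
    eVariationOn f s ≤ eVariationOn f t := by
  refine le_of_forall_lt fun v hv => ?_
  obtain ⟨i, hi⟩ := (lowerSemicontinuous_aux (F := fun i => f ∘ φ i) hf hv).exists
  exact hi.trans_le (comp_le_of_monotoneOn f (φ i) (hφ i) (hst i))

end eVariationOn

theorem Measurable.eVariationOn {Ω α E : Type*} [MeasurableSpace Ω] [LinearOrder α]
    [PseudoEMetricSpace E] [MeasurableSpace E] [OpensMeasurableSpace E] [SecondCountableTopology E]
    {X : Ω → α → E} (hX : ∀ a, Measurable fun ω => X ω a) {s : Set α} (hs : s.Countable) :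
    Measurable fun ω => eVariationOn (X ω) s := by
  have := hs.to_subtype
  simp_rw [eVariationOn.eq_iSup_fin]
  exact .iSup fun m => .iSup fun u => Finset.measurable_sum _ fun i _ => (hX _).edist (hX _)

noncomputable def roundUp (k : ℕ) (t : ℝ≥0) : ℝ≥0 := ⌈t * (k + 1)⌉₊ / (k + 1)

theorem monotone_roundUp (k : ℕ) : Monotone (roundUp k) := fun s t hst => by
  unfold roundUp; gcongr

theorem le_roundUp (k : ℕ) (t : ℝ≥0) : t ≤ roundUp k t :=
  (le_div_iff₀ (by positivity)).2 (Nat.le_ceil _)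

theorem roundUp_lt (k : ℕ) (t : ℝ≥0) : roundUp k t < t + 1 / (k + 1) := by
  rw [roundUp, div_lt_iff₀ (by positivity), add_mul, one_div_mul_cancel (by positivity)]
  exact Nat.ceil_lt_add_one zero_le

theorem roundUp_mem_range_coe (k : ℕ) (t : ℝ≥0) : roundUp k t ∈ range ((↑) : ℚ≥0 → ℝ≥0) :=
  ⟨⌈t * (k + 1)⌉₊ / (k + 1), by simp [roundUp]⟩

theorem tendsto_roundUp (t : ℝ≥0) : Tendsto (fun k => roundUp k t) atTop (𝓝[≥] t) := by
  refine tendsto_nhdsWithin_iff.2 ⟨?_, .of_forall fun k => le_roundUp k t⟩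
  have h := tendsto_const_nhds (x := t) |>.add (tendsto_one_div_add_atTop_nhds_zero_nat (𝕜 := ℝ≥0))
  rw [add_zero] at h
  exact tendsto_of_tendsto_of_tendsto_of_le_of_le tendsto_const_nhds h (le_roundUp · t)
    fun k => (roundUp_lt k t).le

theorem eVariationOn_Iic_le_rat_of_continuousWithinAt_Ici {E : Type*} [PseudoEMetricSpace E]
    {f : ℝ≥0 → E} (hf : ∀ t, ContinuousWithinAt f (Ici t) t) (b : ℝ≥0) :
    eVariationOn f (Iic b) ≤ eVariationOn f (range ((↑) : ℚ≥0 → ℝ≥0) ∩ Iic (b + 1)) := by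
  refine eVariationOn.le_of_tendsto_comp (p := atTop) (fun k => (monotone_roundUp k).monotoneOn _)
    (fun k t ht => ⟨roundUp_mem_range_coe k t, ?_⟩)
    fun t _ => (hf t).tendsto.comp (tendsto_roundUp t)
  calc roundUp k t ≤ t + 1 / (k + 1) := (roundUp_lt k t).le
    _ ≤ b + 1 := add_le_add ht (div_le_self zero_le_one (by simp))

theorem Skorohod.measurable_apply {E : Type*} [TopologicalSpace E] [MeasurableSpace E] (t : ℝ≥0) :
    Measurable fun x : Skorohod E => x.1 t :=
  measurable_iff_comap_le.2 <|
    le_iSup (fun t => MeasurableSpace.comap (fun x : Skorohod E => x.1 t) inferInstance) t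

/-- The set `BV[0,∞)` of functions of bounded variation on each compact interval in
`D_ℝ[0,∞)` is Borel measurable in the Skorohod space. -/
theorem boundedVariation_measurableSet :
    MeasurableSet {x : Skorohod ℝ | ∀ t : ℝ≥0, BoundedVariationOn x.1 (Set.Iic t)} := by
  set Q : Set ℝ≥0 := range ((↑) : ℚ≥0 → ℝ≥0)
  have hBV : {x : Skorohod ℝ | ∀ t : ℝ≥0, BoundedVariationOn x.1 (Set.Iic t)} =
      ⋂ n : ℕ, {x | eVariationOn x.1 (Q ∩ Iic n) ≠ ⊤} := by
    ext x
    simp only [mem_ofPred_eq, mem_iInter]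
    refine ⟨fun h n => ne_top_of_le_ne_top (h n) (eVariationOn.mono _ inter_subset_right),
      fun h t => ?_⟩
    obtain ⟨n, hn⟩ := exists_nat_ge (t + 1)
    refine ne_top_of_le_ne_top (h n) ?_
    exact (eVariationOn_Iic_le_rat_of_continuousWithinAt_Ici x.2.1 t).trans
      (eVariationOn.mono _ (inter_subset_inter_right _ (Iic_subset_Iic.2 hn)))
  rw [hBV]
  exact .iInter fun n => (Measurable.eVariationOn Skorohod.measurable_apply
    ((countable_range _).mono inter_subset_left) (measurableSet_singleton ⊤)).compl
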